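/- Let n ≥ 1 and k ≥ 0 be integers and x > 0. Then (ψ(x)/n)·T''_{n,k}(x)·P_{n,k}(x) = 2(n+k−1)·P_{n+1,k−2}(x) − 2(k+1)·P_{n+1,k+1}(x), where T''_{n,k}(x) = 2k(k−1)/x³ − 2(n+k)(n+k+1)/(1+x)³ and terms with negative second index are interpreted as 0. -/

import Mathlib

/-!
Since `P_{n,k}(x) = C(n+k-1,k) x^k / (1+x)^(n+k)`, multiplying by `ψ(x) / x³` turns the monomial
of `P_{n,k}` into that of `P_{n+1,k-2}`, and multiplying by `ψ(x) / (1+x)³` turns it into that of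
`P_{n+1,k+1}`. Each term of `T''_{n,k}` thus yields one term of the right side, once the binomial
coefficients are matched by `k(k-1) C(n+k-1,k) = n(n+k-1) C(n+k-2,k-2)` and
`(n+k)(n+k+1) C(n+k-1,k) = n(k+1) C(n+k+1,k+1)`.
-/

open MeasureTheory Filter Set

/-- Baskakov basis functions `P_{n,k}(x)`, with `P_{n,k} := 0` for `k < 0`. -/
noncomputable def P (n : ℕ) (k : ℤ) (x : ℝ) : ℝ :=
  if k < 0 then 0
  else (Nat.choose (n + k.toNat - 1) k.toNat : ℝ) * x ^ k.toNat * (1 + x) ^ (-(n : ℤ) - k)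

/-- The weight `ψ(x) = x(1+x)`. -/
noncomputable def psi (x : ℝ) : ℝ := x * (1 + x)

/-- The differential operator `D̃ f = ψ f''`. -/
noncomputable def Dt (f : ℝ → ℝ) : ℝ → ℝ := fun x => psi x * deriv (deriv f) x

/-- The functionals `v_{n,k}`. -/
noncomputable def v (n k : ℕ) (f : ℝ → ℝ) : ℝ :=
  if k = 0 then f 0
  else ((n : ℝ) + 1) * ∫ t in Set.Ioi (0 : ℝ), P (n + 2) ((k : ℤ) - 1) t * f t

/-- The Goodman–Sharma–Baskakov operator `V_n`. -/
noncomputable def V (n : ℕ) (f : ℝ → ℝ) (x : ℝ) : ℝ :=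
  ∑' k : ℕ, v n k f * P n (k : ℤ) x

/-- The modified operator `Ṽ_n`. -/
noncomputable def Vt (n : ℕ) (f : ℝ → ℝ) (x : ℝ) : ℝ :=
  ∑' k : ℕ, v n k f * (P n (k : ℤ) x - (1 / (n : ℝ)) * Dt (P n (k : ℤ)) x)

/-- Supremum norm on `[0,∞)`. -/
noncomputable def supNorm (f : ℝ → ℝ) : ℝ := ⨆ x ∈ Set.Ici (0 : ℝ), |f x|

/-- `f` is bounded and continuous on `[0,∞)`. -/
def BddContOn (f : ℝ → ℝ) : Prop :=
  ContinuousOn f (Set.Ici 0) ∧ ∃ M, ∀ x ∈ Set.Ici (0 : ℝ), |f x| ≤ M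

/-- The space `W²(ψ)`: `g, g'` (locally) differentiable on `(0,∞)` and `D̃ g` bounded. -/
def MemW2 (g : ℝ → ℝ) : Prop :=
  DifferentiableOn ℝ g (Set.Ioi 0) ∧ DifferentiableOn ℝ (deriv g) (Set.Ioi 0) ∧
    ∃ M, ∀ x ∈ Set.Ioi (0 : ℝ), |Dt g x| ≤ M

/-- The space `W²₀(ψ)`: members of `W²(ψ)` with `D̃ g(x) → 0` as `x → 0⁺`. -/
def MemW20 (g : ℝ → ℝ) : Prop :=
  MemW2 g ∧ Filter.Tendsto (Dt g) (nhdsWithin 0 (Set.Ioi 0)) (nhds 0)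

/-- The K-functional `K(f,t)`. -/
noncomputable def Kfun (f : ℝ → ℝ) (t : ℝ) : ℝ :=
  sInf {a : ℝ | ∃ g : ℝ → ℝ, MemW20 g ∧ MemW2 (Dt g) ∧
    a = supNorm (fun x => f x - g x) + t * supNorm (Dt (Dt g))}

/-- The function `T_{n,k}(x)`. -/
noncomputable def T (n : ℕ) (k : ℤ) (x : ℝ) : ℝ :=
  (k : ℝ) * ((k : ℝ) - 1) * (1 + x) / x - 2 * (k : ℝ) * ((n : ℝ) + (k : ℝ))
    + ((n : ℝ) + (k : ℝ)) * ((n : ℝ) + (k : ℝ) + 1) * x / (1 + x)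

theorem Nat.add_two_mul_add_one_mul_choose (n m : ℕ) :
    (m + 2) * (m + 1) * (n + m + 1).choose (m + 2) = n * (n + m + 1) * (n + m).choose m := by
  have h₁ := Nat.add_one_mul_choose_eq (n + m) (m + 1)
  have h₂ := Nat.choose_succ_right_eq (n + m) m
  rw [Nat.add_sub_cancel] at h₂
  linear_combination (m + 1) * h₁.symm + (n + m + 1) * h₂

theorem Nat.add_one_mul_add_two_mul_choose (p k : ℕ) :
    (p + k + 1) * (p + k + 2) * (p + k).choose k
      = (p + 1) * (k + 1) * (p + k + 2).choose (k + 1) := by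
  have h₁ := Nat.add_one_mul_choose_eq (p + k + 1) k
  have h₂ := Nat.choose_mul_succ_eq (p + k) k
  rw [show p + k + 1 - k = p + 1 by omega] at h₂
  linear_combination (p + k + 2) * h₂ + (p + 1) * h₁

theorem P_natCast (n k : ℕ) (x : ℝ) :
    P n k x = (n + k - 1).choose k * x ^ k / (1 + x) ^ (n + k) := by
  rw [P, if_neg (by omega), Int.toNat_natCast, div_eq_mul_inv,
    show -(n : ℤ) - k = -((n + k : ℕ) : ℤ) by push_cast; ring, zpow_neg, zpow_natCast]

theorem P_of_neg {k : ℤ} (hk : k < 0) (n : ℕ) (x : ℝ) : P n k x = 0 := if_pos hk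

theorem psi_div_mul_div_one_add_pow_three_mul_P {n : ℕ} (hn : n ≠ 0) (k : ℕ) {x : ℝ}
    (hx : 1 + x ≠ 0) :
    psi x / n * ((n + k) * (n + k + 1) / (1 + x) ^ 3) * P n k x
      = (k + 1) * P (n + 1) ((k : ℤ) + 1) x := by
  obtain ⟨p, rfl⟩ := Nat.exists_eq_add_one_of_ne_zero hn
  have hchoose := congrArg (Nat.cast : ℕ → ℝ) (Nat.add_one_mul_add_two_mul_choose p k)
  push_cast at hchoose
  rw [show (k : ℤ) + 1 = ((k + 1 : ℕ) : ℤ) by push_cast; ring, P_natCast, P_natCast,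
    show p + 1 + k - 1 = p + k by omega, show p + 1 + 1 + (k + 1) - 1 = p + k + 2 by omega, psi]
  field_simp
  push_cast
  linear_combination x ^ (k + 1) * (1 + x) ^ (p + k + 3) * hchoose

theorem psi_div_mul_div_pow_three_mul_P {n : ℕ} (hn : n ≠ 0) (k : ℕ) {x : ℝ} (hx : x ≠ 0)
    (hx₁ : 1 + x ≠ 0) :
    psi x / n * (k * (k - 1) / x ^ 3) * P n k x = (n + k - 1) * P (n + 1) ((k : ℤ) - 2) x := by
  obtain hk | hk := Nat.lt_or_ge k 2
  · interval_cases k <;> simp [P_of_neg]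
  obtain ⟨m, rfl⟩ := Nat.exists_eq_add_of_le' hk
  obtain ⟨p, rfl⟩ := Nat.exists_eq_add_one_of_ne_zero hn
  have hchoose := congrArg (Nat.cast : ℕ → ℝ) (Nat.add_two_mul_add_one_mul_choose (p + 1) m)
  push_cast at hchoose
  rw [show ((m + 2 : ℕ) : ℤ) - 2 = m by push_cast; ring, P_natCast, P_natCast,
    show p + 1 + (m + 2) - 1 = p + 1 + m + 1 by omega,
    show p + 1 + 1 + m - 1 = p + 1 + m by omega, psi]
  field_simp
  push_cast
  linear_combination x ^ (m + 2) * (1 + x) ^ (p + m + 3) * hchoose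

theorem T''_P_identity (n : ℕ) (hn : 1 ≤ n) (k : ℕ) (x : ℝ) (hx : 0 < x) :
    (psi x / (n : ℝ))
        * (2 * (k : ℝ) * ((k : ℝ) - 1) / x ^ 3
            - 2 * ((n : ℝ) + (k : ℝ)) * ((n : ℝ) + (k : ℝ) + 1) / (1 + x) ^ 3)
        * P n (k : ℤ) x =
      2 * ((n : ℝ) + (k : ℝ) - 1) * P (n + 1) ((k : ℤ) - 2) x
        - 2 * ((k : ℝ) + 1) * P (n + 1) ((k : ℤ) + 1) x := by
  have hn₀ : n ≠ 0 := by omega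
  have hx₁ : 1 + x ≠ 0 := by positivity
  have hsmall := psi_div_mul_div_pow_three_mul_P hn₀ k hx.ne' hx₁
  have hlarge := psi_div_mul_div_one_add_pow_three_mul_P hn₀ k hx₁
  linear_combination 2 * hsmall - 2 * hlarge
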